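/- Let (U,V) be a 2-separation of a connected matroid M that has no series pairs and no parallel pairs. Then (fcl(U), V − fcl(U)) is also a 2-separation of M, where fcl denotes the full closure. -/

import Mathlib

open Set

namespace PaperDefs

variable {α : Type*}

/-- The rank of a set `X` in a matroid `M`, as an extended natural number:
the supremum of the cardinalities of independent subsets of `X`. -/
noncomputable def eRk (M : Matroid α) (X : Set α) : ℕ∞ :=
  ⨆ I ∈ {I | M.Indep I ∧ I ⊆ X}, I.encard

/-- Deletion of a set of elements from a matroid. -/
def del (M : Matroid α) (D : Set α) : Matroid α := M.restrict (M.E \ D)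

/-- Contraction of a set of elements in a matroid. -/
def con (M : Matroid α) (C : Set α) : Matroid α := (del M✶ C)✶

/-- A circuit: a minimal dependent set. -/
def Circuit (M : Matroid α) (C : Set α) : Prop :=
  M.Dep C ∧ ∀ D, D ⊂ C → M.Indep D

/-- A `k`-separation of `M`: a partition `(X, M.E \ X)` with connectivity
`λ(X) = r(X) + r(E−X) − r(M)` at most `k − 1`, and both sides of size at least `k`. -/
def kSeparation (M : Matroid α) (X : Set α) (k : ℕ) : Prop :=
  X ⊆ M.E ∧ eRk M X + eRk M (M.E \ X) ≤ eRk M M.E + ((k - 1 : ℕ) : ℕ∞) ∧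
    (k : ℕ∞) ≤ X.encard ∧ (k : ℕ∞) ≤ (M.E \ X).encard

/-- `M` is `n`-connected if it has no `k`-separations for `0 < k < n`. -/
def NConnected (M : Matroid α) (n : ℕ) : Prop :=
  ∀ k : ℕ, 0 < k → k < n → ∀ X : Set α, ¬ kSeparation M X k

/-- `X` is 3-separating in `M`: `λ_M(X) ≤ 2`. -/
def ThreeSeparating (M : Matroid α) (X : Set α) : Prop :=
  eRk M X + eRk M (M.E \ X) ≤ eRk M M.E + 2

/-- `X` is exactly 3-separating in `M`: `λ_M(X) = 2`. -/
def ExactlyThreeSeparating (M : Matroid α) (X : Set α) : Prop :=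
  eRk M X + eRk M (M.E \ X) = eRk M M.E + 2

/-- `N` is a simplification of `M`: `N` is obtained from `M` by deleting a set of
elements, `N` has no loops or parallel pairs (no circuits of size at most two), and
every element of `M` is in the closure of the ground set of `N`. -/
def IsSimplificationOf (N M : Matroid α) : Prop :=
  (∃ D ⊆ M.E, N = del M D) ∧ (∀ C, Circuit N C → 3 ≤ C.encard) ∧
    M.closure N.E = M.E

/-- `N` is a cosimplification of `M`: `N✶` is a simplification of `M✶`. -/
def IsCosimplificationOf (N M : Matroid α) : Prop :=
  IsSimplificationOf N✶ M✶

/-- `S` is a series class of `M`: a maximal nonempty set any two distinct elements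
of which form a series pair (a two-element cocircuit). -/
def IsSeriesClass (M : Matroid α) (S : Set α) : Prop :=
  S.Nonempty ∧ S ⊆ M.E ∧ (∀ a ∈ S, ∀ b ∈ S, a ≠ b → Circuit M✶ {a, b}) ∧
    (∀ a ∈ S, ∀ f, Circuit M✶ {a, f} → a ≠ f → f ∈ S)

/-- The full closure of `X` in `M`: the intersection of all sets containing `X ∩ M.E`
that are closed in both `M` and `M✶`. -/
def fullClosure (M : Matroid α) (X : Set α) : Set α :=
  ⋂₀ {F | X ∩ M.E ⊆ F ∧ M.closure F = F ∧ M✶.closure F = F}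

end PaperDefs

open PaperDefs

/-!
Closure does not increase `λ(X) = r(X) + r(E - X) - r(M)`, and neither does coclosure: the
elements that coclosure adds to `X` are coloops of `M ＼ X`, so they lower `r(E - X)` by as much
as they can raise `r(X)`. Closing or coclosing a 2-separating set also leaves at least two
elements outside: a single element `e` left outside would make `E - e` closed (or coclosed), so
`e` would be a coloop (or a loop), and nothing left outside would make `E - X` a set of rank
(or corank) at most one with two elements, hence one containing a parallel (or series) pair.
Connectivity forces finite rank, so among the 2-separating sets between `U` and `fcl(U)` there is
one of maximum rank; its closure is then also coclosed, hence equal to `fcl(U)`.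
-/

namespace Matroid

variable {α : Type*} {M : Matroid α} {U X K : Set α} {e : α}

lemma eRk_union_eq_of_subset_coloops (hK : K ⊆ M.coloops) (hXK : Disjoint X K) :
    M.eRk (X ∪ K) = M.eRk X + K.encard := by
  refine le_antisymm (M.eRk_union_le_eRk_add_encard X K) ?_
  obtain ⟨I, hI⟩ := M.exists_isBasis' X
  rw [← hI.encard_eq_eRk, ← encard_union_eq (hXK.mono_left hI.subset)]
  exact ((union_indep_iff_indep_of_subset_coloops hK).2 hI.indep).encard_le_eRk_of_subset
    (union_subset_union_left K hI.subset)

lemma dual_closure_sdiff_eq_coloops_delete (M : Matroid α) (X : Set α) :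
    M✶.closure X \ X = (M ＼ X).coloops := by
  rw [coloops, dual_delete, contract_loops_eq]

/-- `λ_M(X) ≤ 1`, written without subtraction. -/
def TwoSeparating (M : Matroid α) (X : Set α) : Prop :=
  M.eRk X + M.eRk (M.E \ X) ≤ M.eRank + 1

lemma TwoSeparating.closure (h : M.TwoSeparating X) : M.TwoSeparating (M.closure X) := by
  have hcompl : M.E \ M.closure X ⊆ M.E \ X :=
    fun x hx => ⟨hx.1, fun hxX => hx.2 (M.inter_ground_subset_closure X ⟨hxX, hx.1⟩)⟩
  unfold TwoSeparating at h ⊢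
  rw [eRk_closure_eq]
  exact (add_le_add le_rfl (M.eRk_mono hcompl)).trans h

lemma TwoSeparating.dual_closure (h : M.TwoSeparating X) (hX : X ⊆ M.E) :
    M.TwoSeparating (M✶.closure X) := by
  set K := M✶.closure X \ X
  have hXcl : X ⊆ M✶.closure X := M✶.subset_closure X hX
  have hclE : M✶.closure X ⊆ M.E := M✶.closure_subset_ground X
  have hsplit : M✶.closure X = X ∪ K := (union_sdiff_cancel hXcl).symm
  have hcompl : (M.E \ M✶.closure X) ∪ K = M.E \ X := by
    ext x
    have := @hXcl x
    have := @hclE x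
    simp only [K, mem_union, mem_sdiff]
    tauto
  -- the elements of `K` are coloops of `M ＼ X`, so they add fully to the rank of `M.E \ X`
  have hrk : M.eRk (M.E \ M✶.closure X) + K.encard = M.eRk (M.E \ X) := by
    have hK : K ⊆ (M ＼ X).coloops := (M.dual_closure_sdiff_eq_coloops_delete X).subset
    have hdisj : Disjoint (M.E \ M✶.closure X) K :=
      disjoint_sdiff_left.mono_right sdiff_subset
    have := (eRk_union_eq_of_subset_coloops hK hdisj).symm
    rwa [hcompl, delete_eq_restrict, restrict_eRk_eq _ subset_rfl,
      restrict_eRk_eq _ (sdiff_subset_sdiff_right hXcl)] at this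
  unfold TwoSeparating at h ⊢
  calc M.eRk (M✶.closure X) + M.eRk (M.E \ M✶.closure X)
      ≤ M.eRk X + K.encard + M.eRk (M.E \ M✶.closure X) := by
        rw [hsplit]; gcongr; exact M.eRk_union_le_eRk_add_encard X K
    _ = M.eRk X + M.eRk (M.E \ X) := by rw [← hrk]; ring
    _ ≤ M.eRank + 1 := h

lemma two_le_encard_sdiff_closure [M✶.Loopless] (hX : M.closure X ≠ M.E) :
    2 ≤ (M.E \ M.closure X).encard := by
  have hclE := M.closure_subset_ground X
  by_contra! hlt
  obtain ⟨e, he⟩ : (M.E \ M.closure X).Nonempty :=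
    nonempty_of_ssubset (hclE.ssubset_of_ne hX)
  obtain h0 | ⟨f, hf⟩ := encard_le_one_iff_eq.1 (Order.le_of_lt_succ hlt)
  · simp [h0] at he
  obtain rfl : e = f := by simpa [hf] using he
  have hcl : M.closure X = M.E \ {e} := by rw [← hf, sdiff_sdiff_cancel_left hclE]
  have hcoloop : M.IsColoop e := by
    rw [isColoop_iff_notMem_closure_compl he.1, ← hcl, closure_closure]
    exact he.2
  exact M✶.not_isLoop e hcoloop

lemma exists_isCircuit_pair_of_eRk_le_one [M.Loopless] (hXE : X ⊆ M.E) (hX : 1 < X.encard)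
    (hr : M.eRk X ≤ 1) : ∃ a b, a ≠ b ∧ M.IsCircuit {a, b} := by
  obtain ⟨a, b, ha, hb, hab⟩ := one_lt_encard_iff.1 hX
  have hpair : ({a, b} : Set α) ⊆ X := insert_subset ha (singleton_subset_iff.2 hb)
  refine ⟨a, b, hab, isCircuit_iff_dep_forall_sdiff_singleton_indep.2 ⟨?_, ?_⟩⟩
  · rw [← not_indep_iff (hpair.trans hXE)]
    intro hind
    have := (hind.encard_le_eRk_of_subset hpair).trans hr
    rw [encard_pair hab] at this
    exact absurd this (by norm_num)
  · rintro e (rfl | rfl)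
    · rw [pair_sdiff_left hab, indep_singleton]
      exact isNonloop_of_loopless (hXE hb)
    · rw [pair_sdiff_right hab, indep_singleton]
      exact isNonloop_of_loopless (hXE ha)

lemma TwoSeparating.closure_ne_ground [M.RankFinite] [M.Loopless] (h : M.TwoSeparating X)
    (hpar : ∀ a b, a ≠ b → ¬ M.IsCircuit {a, b}) (h2 : 2 ≤ (M.E \ X).encard) :
    M.closure X ≠ M.E := by
  intro hcl
  have hrX : M.eRk X = M.eRank := by rw [← eRk_closure_eq, hcl, eRk_ground]
  have hr : M.eRk (M.E \ X) ≤ 1 := by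
    rw [TwoSeparating, hrX] at h
    exact (ENat.add_le_add_iff_left (M.eRank_ne_top_iff.2 ‹_›)).1 h
  obtain ⟨a, b, hab, hC⟩ :=
    exists_isCircuit_pair_of_eRk_le_one sdiff_subset (lt_of_lt_of_le (by norm_num) h2) hr
  exact hpar a b hab hC

lemma TwoSeparating.dual_closure_ne_ground [M.RankFinite] [M✶.Loopless] (h : M.TwoSeparating X)
    (hX : X ⊆ M.E) (hser : ∀ a b, a ≠ b → ¬ M✶.IsCircuit {a, b})
    (h2 : 2 ≤ (M.E \ X).encard) :
    M✶.closure X ≠ M.E := by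
  intro hcl
  have hind : M.Indep (M.E \ X) := by
    simpa using ((M✶.spanning_iff_closure_eq hX).2 hcl).compl_coindep
  obtain ⟨a, b, ha, hb, hab⟩ := one_lt_encard_iff.1 (lt_of_lt_of_le (by norm_num) h2)
  have hpair : ({a, b} : Set α) ⊆ M.E \ X := insert_subset ha (singleton_subset_iff.2 hb)
  have hcover : M.E \ {a, b} = X ∪ (M.E \ X) \ {a, b} := by
    ext x
    have hxX := @hX x
    have hxab := @hpair x
    simp only [mem_union, mem_sdiff] at hxab ⊢
    tauto
  have hrk : M.eRk (M.E \ {a, b}) + 2 ≤ M.eRk X + M.eRk (M.E \ X) := by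
    rw [hcover, hind.eRk_eq_encard, ← encard_pair hab,
      ← encard_sdiff_add_encard_of_subset hpair, ← add_assoc]
    gcongr
    exact M.eRk_union_le_eRk_add_encard _ _
  have hr : M✶.eRk {a, b} ≤ 1 := by
    have hdual := M.eRk_dual_add_eRank {a, b} (hpair.trans sdiff_subset)
    rw [encard_pair hab] at hdual
    refine (ENat.add_le_add_iff_right (M.eRank_ne_top_iff.2 ‹_›)).1 ?_
    rw [hdual, add_comm 1]
    exact hrk.trans h
  obtain ⟨c, d, hcd, hC⟩ := exists_isCircuit_pair_of_eRk_le_one (M := M✶)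
    (hpair.trans sdiff_subset) (by rw [encard_pair hab]; norm_num) hr
  exact hser c d hcd hC

section Connected

variable (hM : ∀ e ∈ M.E, M.eRank < M.eRk {e} + M.eRk (M.E \ {e}))
include hM

lemma rankFinite_of_forall_eRank_lt (he : e ∈ M.E) : M.RankFinite := by
  rw [← eRank_ne_top_iff]
  exact (hM e he).ne_top

lemma loopless_of_forall_eRank_lt : M.Loopless := by
  refine loopless_iff_forall_not_isLoop.2 fun e he hloop => (hM e he).not_ge ?_
  rw [hloop.eRk_eq, zero_add]
  exact M.eRk_le_eRank _

lemma dual_loopless_of_forall_eRank_lt : M✶.Loopless := by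
  refine loopless_iff_forall_not_isLoop.2 fun e he hloop => (hM e he).not_ge ?_
  have hcoloop : {e} ⊆ M.coloops := singleton_subset_iff.2 hloop
  have := eRk_union_eq_of_subset_coloops hcoloop (X := M.E \ {e}) disjoint_sdiff_left
  rw [sdiff_union_self, eRk_ground_union, encard_singleton] at this
  rw [this, add_comm]
  exact add_le_add_right (M.eRk_singleton_le e) _

end Connected

lemma exists_mem_forall_eRk_le [M.RankFinite] {S : Set (Set α)} (hS : S.Nonempty) :
    ∃ X ∈ S, ∀ Y ∈ S, M.eRk Y ≤ M.eRk X := by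
  have : Nonempty (M.eRk '' S) := (hS.image _).to_subtype
  have hlt : sSup (M.eRk '' S) < ⊤ :=
    (sSup_le (forall_mem_image.2 fun X _ => M.eRk_le_eRank X)).trans_lt
      (eRank_lt_top_iff.2 ‹_›)
  obtain ⟨X, hX, hXeq⟩ := ENat.sSup_mem_of_nonempty_of_lt_top hlt
  exact ⟨X, hX, fun Y hY => hXeq ▸ le_sSup (mem_image_of_mem _ hY)⟩

lemma closure_subset_fullClosure (h : X ⊆ fullClosure M U) :
    M.closure X ⊆ fullClosure M U :=
  subset_sInter fun _ hF =>
    hF.2.1 ▸ M.closure_subset_closure (h.trans (sInter_subset_of_mem hF))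

lemma dual_closure_subset_fullClosure (h : X ⊆ fullClosure M U) :
    M✶.closure X ⊆ fullClosure M U :=
  subset_sInter fun _ hF =>
    hF.2.2 ▸ M✶.closure_subset_closure (h.trans (sInter_subset_of_mem hF))

theorem TwoSeparating.fullClosure_twoSeparating [M.RankFinite] [M.Loopless] [M✶.Loopless]
    (hpar : ∀ a b, a ≠ b → ¬ M.IsCircuit {a, b})
    (hser : ∀ a b, a ≠ b → ¬ M✶.IsCircuit {a, b}) (hU : M.TwoSeparating U)
    (hUE : U ⊆ M.E) (hU2 : 2 ≤ (M.E \ U).encard) :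
    U ⊆ fullClosure M U ∧ fullClosure M U ⊆ M.E ∧ M.TwoSeparating (fullClosure M U) ∧
      2 ≤ (M.E \ fullClosure M U).encard := by
  set S := {X | U ⊆ X ∧ X ⊆ fullClosure M U ∧ X ⊆ M.E ∧ M.TwoSeparating X ∧
    2 ≤ (M.E \ X).encard}
  have hUS : U ∈ S :=
    ⟨subset_rfl, subset_sInter fun _ hF => (inter_eq_left.2 hUE) ▸ hF.1, hUE, hU, hU2⟩
  have hclS : ∀ X ∈ S, M.closure X ∈ S := fun X ⟨hUX, hXF, hXE, hX, hX2⟩ =>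
    ⟨hUX.trans (M.subset_closure X hXE), closure_subset_fullClosure hXF,
      M.closure_subset_ground X, hX.closure,
      two_le_encard_sdiff_closure (hX.closure_ne_ground hpar hX2)⟩
  have hdclS : ∀ X ∈ S, M✶.closure X ∈ S := fun X ⟨hUX, hXF, hXE, hX, hX2⟩ => by
    have : M✶✶.Loopless := by rwa [dual_dual]
    refine ⟨hUX.trans (M✶.subset_closure X hXE), dual_closure_subset_fullClosure hXF,
      M✶.closure_subset_ground X, hX.dual_closure hXE, ?_⟩
    simpa using two_le_encard_sdiff_closure (M := M✶) (hX.dual_closure_ne_ground hXE hser hX2)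
  -- the closure of a member of `S` of maximum rank is fully closed, hence equal to `fcl U`
  obtain ⟨X, hXS, hXmax⟩ := exists_mem_forall_eRk_le (M := M) ⟨U, hUS⟩
  set F := M.closure X
  have hFS : F ∈ S := hclS X hXS
  have hFd : M✶.closure F = F := by
    have hFY : F ⊆ M✶.closure F := M✶.subset_closure F hFS.2.2.1
    have hcl : M.closure F = M.closure (M✶.closure F) :=
      (M.isRkFinite_set F).closure_eq_closure_of_subset_of_eRk_ge_eRk hFY
        (by rw [eRk_closure_eq]; exact hXmax _ (hdclS F hFS))
    refine subset_antisymm ?_ hFY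
    calc M✶.closure F ⊆ M.closure (M✶.closure F) := M.subset_closure _ (hdclS F hFS).2.2.1
      _ = F := by rw [← hcl, closure_closure]
  have hFeq : fullClosure M U = F :=
    subset_antisymm
      (sInter_subset_of_mem ⟨inter_subset_left.trans hFS.1, closure_closure M X, hFd⟩) hFS.2.1
  rw [hFeq]
  exact ⟨hFS.1, hFS.2.2⟩

end Matroid

namespace PaperDefs

variable {α : Type*}

lemma eRk_eq_eRk (M : Matroid α) (X : Set α) : eRk M X = M.eRk X := by
  refine le_antisymm (iSup₂_le fun I hI => hI.1.encard_le_eRk_of_subset hI.2) ?_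
  obtain ⟨I, hI⟩ := M.exists_isBasis' X
  rw [← hI.encard_eq_eRk]
  exact le_iSup₂ (f := fun I (_ : I ∈ {I | M.Indep I ∧ I ⊆ X}) => I.encard) I
    ⟨hI.indep, hI.subset⟩

lemma circuit_iff_isCircuit {M : Matroid α} {C : Set α} : Circuit M C ↔ M.IsCircuit C := by
  rw [Matroid.isCircuit_iff_dep_forall_sdiff_singleton_indep]
  refine and_congr_right fun hC => ⟨fun h e he => h _ (sdiff_singleton_ssubset.2 he), ?_⟩
  intro h D hDC
  obtain ⟨e, heC, heD⟩ := exists_of_ssubset hDC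
  exact (h e heC).subset (subset_sdiff_singleton hDC.subset heD)

lemma kSeparation_two_iff {M : Matroid α} {X : Set α} :
    kSeparation M X 2 ↔
      X ⊆ M.E ∧ M.TwoSeparating X ∧ 2 ≤ X.encard ∧ 2 ≤ (M.E \ X).encard := by
  simp only [kSeparation, eRk_eq_eRk, Matroid.eRk_ground, Matroid.TwoSeparating]
  norm_num

lemma forall_eRank_lt_of_forall_not_kSeparation_one {M : Matroid α}
    (h : ∀ X, ¬ kSeparation M X 1) (hE : 1 < M.E.encard) :
    ∀ e ∈ M.E, M.eRank < M.eRk {e} + M.eRk (M.E \ {e}) := by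
  intro e he
  by_contra! hle
  obtain ⟨f, hf, hfe⟩ := exists_ne_of_one_lt_encard hE e
  refine h {e} ⟨singleton_subset_iff.2 he, by simpa [eRk_eq_eRk] using hle, by simp, ?_⟩
  exact one_le_encard_iff_nonempty.2 ⟨f, hf, hfe⟩

end PaperDefs

theorem statement_8_general {α : Type*} (M : Matroid α) (U V : Set α)
    (hconn : NConnected M 2)
    (hnopar : ∀ a b : α, a ≠ b → ¬ Circuit M {a, b})
    (hnoser : ∀ a b : α, a ≠ b → ¬ Circuit M✶ {a, b})
    (hu : U ∪ V = M.E) (hsep : kSeparation M U 2) :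
    kSeparation M (fullClosure M U) 2 ∧
      M.E \ fullClosure M U = V \ fullClosure M U := by
  rw [kSeparation_two_iff] at hsep ⊢
  obtain ⟨hUE, hU, hU2, hV2⟩ := hsep
  have hE : 1 < M.E.encard := lt_of_lt_of_le (by norm_num) (hU2.trans (encard_le_encard hUE))
  have hM := forall_eRank_lt_of_forall_not_kSeparation_one (hconn 1 one_pos one_lt_two) hE
  obtain ⟨e, he⟩ := one_le_encard_iff_nonempty.1 hE.le
  have := Matroid.rankFinite_of_forall_eRank_lt hM he
  have := Matroid.loopless_of_forall_eRank_lt hM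
  have := Matroid.dual_loopless_of_forall_eRank_lt hM
  obtain ⟨hUF, hFE, hF, hF2⟩ := hU.fullClosure_twoSeparating
    (fun a b hab hC => hnopar a b hab (circuit_iff_isCircuit.2 hC))
    (fun a b hab hC => hnoser a b hab (circuit_iff_isCircuit.2 hC)) hUE hV2
  refine ⟨⟨hFE, hF, hU2.trans (encard_le_encard hUF), hF2⟩, ?_⟩
  rw [← hu, union_sdiff_distrib, sdiff_eq_empty.2 hUF, empty_union]

/-- If `(U,V)` is a 2-separation of a connected matroid `M` with no
series or parallel pairs, then `(fcl(U), V − fcl(U))` is also a 2-separation of `M`. -/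
theorem statement_8 {α : Type*} (M : Matroid α) (U V : Set α)
    (hconn : NConnected M 2)
    (hnopar : ∀ a b : α, a ≠ b → ¬ Circuit M {a, b})
    (hnoser : ∀ a b : α, a ≠ b → ¬ Circuit M✶ {a, b})
    (hu : U ∪ V = M.E) (hd : Disjoint U V) (hsep : kSeparation M U 2) :
    kSeparation M (fullClosure M U) 2 ∧
      M.E \ fullClosure M U = V \ fullClosure M U :=
  statement_8_general M U V hconn hnopar hnoser hu hsep
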